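/- Let f : ℝ → ℝ be differentiable with f > 0 such that f'/f is differentiable and satisfies (f'/f)'(y) < (Φ''/Φ')'(y) for all y ∈ ℝ, and suppose y∞ ∈ ℝ satisfies (f'/f)(y∞) = (Φ''/Φ')(y∞). Then M₂(y∞) = 0, M₂(y) > 0 for every y > y∞, and M₂(y) < 0 for every y < y∞. -/

import Mathlib

open MeasureTheory Real Filter

/-- `Fa a x = ∫₀^∞ exp(-t² - 2xt) · t^a dt`, a Hermite-type function of negative degree. -/
noncomputable def Fa (a x : ℝ) : ℝ :=
  ∫ t in Set.Ioi (0 : ℝ), Real.exp (-(t ^ 2) - 2 * x * t) * t ^ a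

/-- `Phi β σh δ c x = F_a(u(x))` with `a = δ/β - 1` and `u(x) = (c - βx)/(√β·σ̂)`. -/
noncomputable def Phi (β σh δ c : ℝ) (x : ℝ) : ℝ :=
  Fa (δ / β - 1) ((c - β * x) / (Real.sqrt β * σh))

/-- `M₁ = (f·Φ' - f'·Φ)/D` with `D = (Φ')² - Φ·Φ''`. -/
noncomputable def M1 (β σh δ c : ℝ) (f : ℝ → ℝ) (y : ℝ) : ℝ :=
  (f y * deriv (Phi β σh δ c) y - deriv f y * Phi β σh δ c y) /
    ((deriv (Phi β σh δ c) y) ^ 2 - Phi β σh δ c y * deriv (deriv (Phi β σh δ c)) y)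

/-- `M₂ = (f'·Φ' - f·Φ'')/D` with `D = (Φ')² - Φ·Φ''`. -/
noncomputable def M2 (β σh δ c : ℝ) (f : ℝ → ℝ) (y : ℝ) : ℝ :=
  (deriv f y * deriv (Phi β σh δ c) y - f y * deriv (deriv (Phi β σh δ c)) y) /
    ((deriv (Phi β σh δ c) y) ^ 2 - Phi β σh δ c y * deriv (deriv (Phi β σh δ c)) y)

/-!
Write `Φ = F_a ∘ u` with `u` affine of slope `m < 0`. Differentiating under the integral sign gives
`F_a' = -2 F_{a+1}`, hence `Φ' = -2m F_{a+1}(u) > 0` and `Φ'' = 4m² F_{a+2}(u)`; so `D < 0` is the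
strict Cauchy–Schwarz inequality `F_{a+1}² < F_a F_{a+2}` for the positive weight `e^{-t²-2zt} t^a`
on `(0, ∞)`. Then `M₂ = f Φ' / (-D) · (Φ''/Φ' - f'/f)`, where the first factor is positive and the
second is strictly increasing by hypothesis and vanishes at `y∞`.
-/

theorem setIntegral_pos_of_ae_pos {α : Type*} [MeasurableSpace α] {μ : Measure α} {s : Set α}
    {g : α → ℝ} (hg : IntegrableOn g s μ) (hpos : ∀ᵐ t ∂μ.restrict s, 0 < g t) (hs : μ s ≠ 0) :
    0 < ∫ t in s, g t ∂μ := by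
  refine (integral_pos_iff_support_of_nonneg_ae (hpos.mono fun _ ht => ht.le) hg).2 ?_
  refine pos_iff_ne_zero.2 fun h => hs ?_
  have hfalse : ∀ᵐ t ∂μ.restrict s, False := by
    filter_upwards [hpos, measure_eq_zero_iff_ae_notMem.1 h] with t ht hts
    exact hts ht.ne'
  rwa [eventually_false_iff_eq_bot, ae_eq_bot, Measure.restrict_eq_zero] at hfalse

theorem strictMono_sub_of_deriv_lt {g h : ℝ → ℝ} (hg : Differentiable ℝ g)
    (hh : Differentiable ℝ h) (hlt : ∀ y, deriv g y < deriv h y) :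
    StrictMono fun y => h y - g y :=
  strictMono_of_deriv_pos fun y => by
    rw [deriv_fun_sub (hh y) (hg y)]
    exact sub_pos.2 (hlt y)

theorem sign_of_div_wronskian {Φ f M : ℝ → ℝ}
    (hM : ∀ y, M y = (deriv f y * deriv Φ y - f y * deriv (deriv Φ) y) /
      (deriv Φ y ^ 2 - Φ y * deriv (deriv Φ) y))
    (hΦ' : ∀ y, 0 < deriv Φ y) (hD : ∀ y, deriv Φ y ^ 2 - Φ y * deriv (deriv Φ) y < 0)
    (hΦdiff : Differentiable ℝ fun z => deriv (deriv Φ) z / deriv Φ z)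
    (hfpos : ∀ y, 0 < f y) (hfdiff : Differentiable ℝ fun z => deriv f z / f z)
    (hlt : ∀ y, deriv (fun z => deriv f z / f z) y <
      deriv (fun z => deriv (deriv Φ) z / deriv Φ z) y)
    {y₀ : ℝ} (hroot : deriv f y₀ / f y₀ = deriv (deriv Φ) y₀ / deriv Φ y₀) :
    M y₀ = 0 ∧ (∀ y, y₀ < y → 0 < M y) ∧ ∀ y, y < y₀ → M y < 0 := by
  set gap := fun y => deriv (deriv Φ) y / deriv Φ y - deriv f y / f y
  have hmono : StrictMono gap := strictMono_sub_of_deriv_lt hfdiff hΦdiff hlt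
  have hgap₀ : gap y₀ = 0 := sub_eq_zero.2 hroot.symm
  have hweight : ∀ y, 0 < f y * deriv Φ y / -(deriv Φ y ^ 2 - Φ y * deriv (deriv Φ) y) :=
    fun y => div_pos (mul_pos (hfpos y) (hΦ' y)) (neg_pos.2 (hD y))
  have hfactor : ∀ y,
      M y = f y * deriv Φ y / -(deriv Φ y ^ 2 - Φ y * deriv (deriv Φ) y) * gap y := by
    intro y
    have := (hΦ' y).ne'
    have := (hfpos y).ne'
    have := (hD y).ne
    rw [hM]
    simp only [gap]
    field_simp
    ring
  refine ⟨by rw [hfactor, hgap₀, mul_zero], fun y hy => ?_, fun y hy => ?_⟩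
  · rw [hfactor]
    exact mul_pos (hweight y) (hgap₀ ▸ hmono hy)
  · rw [hfactor]
    exact mul_neg_of_pos_of_neg (hweight y) (hgap₀ ▸ hmono hy)

section FaIntegral

open Set

noncomputable def faIntegrand (a z t : ℝ) : ℝ := exp (-(t ^ 2) - 2 * z * t) * t ^ a

theorem faIntegrand_pos (a z : ℝ) {t : ℝ} (ht : 0 < t) : 0 < faIntegrand a z t := by
  unfold faIntegrand; positivity

theorem faIntegrand_add_one (a z : ℝ) {t : ℝ} (ht : 0 < t) :
    faIntegrand (a + 1) z t = t * faIntegrand a z t := by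
  simp only [faIntegrand, rpow_add ht, rpow_one]; ring

theorem exp_neg_sq_sub_le {z R : ℝ} (hz : |z| ≤ R) (t : ℝ) :
    exp (-(t ^ 2) - 2 * z * t) ≤ exp (2 * R ^ 2) * exp (-(1 / 2) * t ^ 2) := by
  rw [← exp_add, exp_le_exp]
  nlinarith [sq_nonneg (t + 2 * z), sq_abs z, abs_nonneg z]

theorem norm_faIntegrand_le (a : ℝ) {z R : ℝ} (hz : |z| ≤ R) {t : ℝ} (ht : 0 < t) :
    ‖faIntegrand a z t‖ ≤ exp (2 * R ^ 2) * (t ^ a * exp (-(1 / 2) * t ^ 2)) := by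
  rw [Real.norm_of_nonneg (faIntegrand_pos a z ht).le, faIntegrand]
  calc exp (-(t ^ 2) - 2 * z * t) * t ^ a
      ≤ exp (2 * R ^ 2) * exp (-(1 / 2) * t ^ 2) * t ^ a := by
        gcongr; exact exp_neg_sq_sub_le hz t
    _ = _ := by ring

theorem integrableOn_faIntegrand {a : ℝ} (ha : -1 < a) (z : ℝ) :
    IntegrableOn (faIntegrand a z) (Ioi 0) := by
  refine ((integrableOn_rpow_mul_exp_neg_mul_sq one_half_pos ha).const_mul
    (exp (2 * |z| ^ 2))).mono' ?_ ?_
  · exact (by unfold faIntegrand; fun_prop : Measurable (faIntegrand a z)).aestronglyMeasurable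
  · filter_upwards [ae_restrict_mem measurableSet_Ioi] with t ht
    exact norm_faIntegrand_le a le_rfl ht

theorem Fa_pos {a : ℝ} (ha : -1 < a) (z : ℝ) : 0 < Fa a z :=
  setIntegral_pos_of_ae_pos (integrableOn_faIntegrand ha z)
    ((ae_restrict_mem measurableSet_Ioi).mono fun _ ht => faIntegrand_pos a z ht) (by simp)

theorem hasDerivAt_faIntegrand (a : ℝ) {t : ℝ} (ht : 0 < t) (z : ℝ) :
    HasDerivAt (faIntegrand a · t) (-2 * faIntegrand (a + 1) z t) z := by
  rw [faIntegrand_add_one a z ht]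
  have hexp := (((hasDerivAt_id' z).const_mul 2).mul_const t).const_sub (-(t ^ 2)) |>.exp
  exact (hexp.mul_const (t ^ a)).congr_deriv (by unfold faIntegrand; ring)

theorem hasDerivAt_Fa {a : ℝ} (ha : -1 < a) (z : ℝ) :
    HasDerivAt (Fa a) (-2 * Fa (a + 1) z) z := by
  have hbound : ∀ᵐ t ∂volume.restrict (Ioi 0), ∀ x ∈ Metric.ball z 1,
      ‖-2 * faIntegrand (a + 1) x t‖ ≤
        2 * (exp (2 * (|z| + 1) ^ 2) * (t ^ (a + 1) * exp (-(1 / 2) * t ^ 2))) := by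
    filter_upwards [ae_restrict_mem measurableSet_Ioi] with t ht x hx
    have hxz : |x| ≤ |z| + 1 := by
      have := abs_sub_abs_le_abs_sub x z
      rw [Metric.mem_ball, Real.dist_eq] at hx
      linarith
    rw [norm_mul, norm_neg, Real.norm_two]
    exact mul_le_mul_of_nonneg_left (norm_faIntegrand_le (a + 1) hxz ht) zero_le_two
  have key := hasDerivAt_integral_of_dominated_loc_of_deriv_le (Metric.ball_mem_nhds z one_pos)
    (Eventually.of_forall fun x => (integrableOn_faIntegrand ha x).aestronglyMeasurable)
    (integrableOn_faIntegrand ha z)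
    ((integrableOn_faIntegrand (by linarith) z).aestronglyMeasurable.const_mul (-2)) hbound
    (((integrableOn_rpow_mul_exp_neg_mul_sq one_half_pos (by linarith)).const_mul _).const_mul 2)
    ((ae_restrict_mem measurableSet_Ioi).mono fun t ht x _ => hasDerivAt_faIntegrand a ht x)
  rw [integral_const_mul] at key
  exact key.2

theorem faIntegrand_add_two (a z : ℝ) {t : ℝ} (ht : 0 < t) :
    faIntegrand (a + 2) z t = t ^ 2 * faIntegrand a z t := by
  rw [show a + 2 = a + 1 + 1 by ring, faIntegrand_add_one _ z ht, faIntegrand_add_one a z ht]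
  ring

-- The left-hand side is `∫ (t - l)² · faIntegrand a z t` over `t > 0`.
theorem Fa_add_two_sub_add_pos {a : ℝ} (ha : -1 < a) (z l : ℝ) :
    0 < Fa (a + 2) z - 2 * l * Fa (a + 1) z + l ^ 2 * Fa a z := by
  have hexpand : EqOn (fun t => (t - l) ^ 2 * faIntegrand a z t)
      (fun t => faIntegrand (a + 2) z t - 2 * l * faIntegrand (a + 1) z t +
        l ^ 2 * faIntegrand a z t) (Ioi 0) := fun t ht => by
    simp only [faIntegrand_add_two a z ht, faIntegrand_add_one a z ht]; ring
  have hint₂ := integrableOn_faIntegrand (a := a + 2) (by linarith) z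
  have hint₁ := (integrableOn_faIntegrand (a := a + 1) (by linarith) z).const_mul (2 * l)
  have hint₀ := (integrableOn_faIntegrand ha z).const_mul (l ^ 2)
  have hint₂₁ : IntegrableOn (fun t => faIntegrand (a + 2) z t - 2 * l * faIntegrand (a + 1) z t)
      (Ioi 0) := hint₂.sub hint₁
  have hpos : ∀ᵐ t ∂volume.restrict (Ioi 0), 0 < (t - l) ^ 2 * faIntegrand a z t := by
    filter_upwards [ae_restrict_mem measurableSet_Ioi, ae_restrict_of_ae (volume.ae_ne l)]
      with t ht htl
    have := faIntegrand_pos a z ht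
    have := sub_ne_zero.2 htl
    positivity
  calc 0 < ∫ t in Ioi 0, (t - l) ^ 2 * faIntegrand a z t :=
        setIntegral_pos_of_ae_pos ((hint₂₁.add hint₀).congr_fun hexpand.symm
          measurableSet_Ioi) hpos (by simp)
    _ = _ := by
      rw [setIntegral_congr_fun measurableSet_Ioi hexpand, integral_add hint₂₁ hint₀,
        integral_sub hint₂ hint₁, integral_const_mul, integral_const_mul]
      rfl

theorem Fa_add_one_sq_lt {a : ℝ} (ha : -1 < a) (z : ℝ) :
    Fa (a + 1) z ^ 2 < Fa a z * Fa (a + 2) z := by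
  have h₀ := Fa_pos ha z
  have h := mul_pos h₀ (Fa_add_two_sub_add_pos ha z (Fa (a + 1) z / Fa a z))
  field_simp at h
  linarith

end FaIntegral

section AffineComposition

variable {a m : ℝ} {u : ℝ → ℝ}

theorem hasDerivAt_Fa_comp (ha : -1 < a) {x : ℝ} (hu : HasDerivAt u m x) :
    HasDerivAt (fun x => Fa a (u x)) (-2 * m * Fa (a + 1) (u x)) x :=
  ((hasDerivAt_Fa ha (u x)).comp x hu).congr_deriv (by ring)

theorem deriv_Fa_comp (ha : -1 < a) (hu : ∀ x, HasDerivAt u m x) :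
    deriv (fun x => Fa a (u x)) = fun x => -2 * m * Fa (a + 1) (u x) :=
  funext fun x => (hasDerivAt_Fa_comp ha (hu x)).deriv

theorem deriv_deriv_Fa_comp (ha : -1 < a) (hu : ∀ x, HasDerivAt u m x) :
    deriv (deriv fun x => Fa a (u x)) = fun x => 4 * m ^ 2 * Fa (a + 2) (u x) := by
  rw [deriv_Fa_comp ha hu]
  funext x
  rw [((hasDerivAt_Fa_comp (by linarith) (hu x)).const_mul (-2 * m)).deriv,
    show a + 1 + 1 = a + 2 by ring]
  ring

theorem deriv_Fa_comp_pos (ha : -1 < a) (hu : ∀ x, HasDerivAt u m x) (hm : m < 0) (x : ℝ) :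
    0 < deriv (fun x => Fa a (u x)) x := by
  rw [deriv_Fa_comp ha hu]
  have := Fa_pos (a := a + 1) (by linarith) (u x)
  nlinarith

theorem deriv_Fa_comp_sq_sub_lt (ha : -1 < a) (hu : ∀ x, HasDerivAt u m x) (hm : m ≠ 0)
    (x : ℝ) :
    deriv (fun x => Fa a (u x)) x ^ 2 -
      Fa a (u x) * deriv (deriv fun x => Fa a (u x)) x < 0 := by
  rw [deriv_deriv_Fa_comp ha hu, deriv_Fa_comp ha hu]
  have := mul_lt_mul_of_pos_left (Fa_add_one_sq_lt ha (u x)) (by positivity : 0 < 4 * m ^ 2)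
  linarith

theorem differentiable_deriv_deriv_Fa_comp_div (ha : -1 < a) (hu : ∀ x, HasDerivAt u m x)
    (hm : m ≠ 0) :
    Differentiable ℝ fun x =>
      deriv (deriv fun x => Fa a (u x)) x / deriv (fun x => Fa a (u x)) x := by
  rw [deriv_deriv_Fa_comp ha hu, deriv_Fa_comp ha hu]
  refine Differentiable.div (fun x => ?_) (fun x => ?_) fun x => ?_
  · exact ((hasDerivAt_Fa_comp (by linarith) (hu x)).const_mul _).differentiableAt
  · exact ((hasDerivAt_Fa_comp (by linarith) (hu x)).const_mul _).differentiableAt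
  · have := (Fa_pos (a := a + 1) (by linarith) (u x)).ne'
    positivity

end AffineComposition

theorem sign_of_M2_general (β σh δ c : ℝ) (hβ : 0 < β) (hσ : 0 < σh) (hδ : 0 < δ)
    (f : ℝ → ℝ) (hfpos : ∀ y : ℝ, 0 < f y)
    (hdiff : Differentiable ℝ (fun z => deriv f z / f z))
    (hratio : ∀ y : ℝ, deriv (fun z => deriv f z / f z) y <
      deriv (fun z => deriv (deriv (Phi β σh δ c)) z / deriv (Phi β σh δ c) z) y)
    (yinf : ℝ)
    (hroot : deriv f yinf / f yinf =
      deriv (deriv (Phi β σh δ c)) yinf / deriv (Phi β σh δ c) yinf) :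
    M2 β σh δ c f yinf = 0 ∧
    (∀ y : ℝ, yinf < y → 0 < M2 β σh δ c f y) ∧
    (∀ y : ℝ, y < yinf → M2 β σh δ c f y < 0) := by
  have ha : -1 < δ / β - 1 := by linarith [div_pos hδ hβ]
  have hu : ∀ x, HasDerivAt (fun x => (c - β * x) / (√β * σh)) (-β / (√β * σh)) x :=
    fun x => by simpa using (((hasDerivAt_id' x).const_mul β).const_sub c).div_const (√β * σh)
  have hm : -β / (√β * σh) < 0 := div_neg_of_neg_of_pos (by linarith) (by positivity)
  exact sign_of_div_wronskian (Φ := Phi β σh δ c) (fun _ => rfl) (deriv_Fa_comp_pos ha hu hm)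
    (deriv_Fa_comp_sq_sub_lt ha hu hm.ne) (differentiable_deriv_deriv_Fa_comp_div ha hu hm.ne)
    hfpos hdiff hratio hroot

/-- Sign of `M₂`: at the point `y∞` where `f'/f = Φ''/Φ'` one has `M₂(y∞) = 0`, with
`M₂ > 0` to the right and `M₂ < 0` to the left of `y∞`. -/
theorem sign_of_M2 (β σh δ c : ℝ) (hβ : 0 < β) (hσ : 0 < σh) (hδ : 0 < δ)
    (f : ℝ → ℝ) (hf : Differentiable ℝ f) (hfpos : ∀ y : ℝ, 0 < f y)
    (hdiff : Differentiable ℝ (fun z => deriv f z / f z))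
    (hratio : ∀ y : ℝ, deriv (fun z => deriv f z / f z) y <
      deriv (fun z => deriv (deriv (Phi β σh δ c)) z / deriv (Phi β σh δ c) z) y)
    (yinf : ℝ)
    (hroot : deriv f yinf / f yinf =
      deriv (deriv (Phi β σh δ c)) yinf / deriv (Phi β σh δ c) yinf) :
    M2 β σh δ c f yinf = 0 ∧
    (∀ y : ℝ, yinf < y → 0 < M2 β σh δ c f y) ∧
    (∀ y : ℝ, y < yinf → M2 β σh δ c f y < 0) :=
  sign_of_M2_general β σh δ c hβ hσ hδ f hfpos hdiff hratio yinf hroot
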